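/- arXiv:2501.17970 — 2 statements merged into one kernel-verified Lean document; each statement's English description precedes it below -/
import Mathlib

section
/- For k ≥ 1, the graded R-algebras R_1 = R[h,v]/(hv, h^{2k+1}, h^{2k} − v^2) and R_{-1} = R[h,v]/(hv, h^{2k+1}, h^{2k} + v^2), with deg h = 2 and deg v = 2k, are not isomorphic as graded R-algebras. -/
open MvPolynomial

/-- The real cohomology algebra of a `2k`-dimensional `b`-twisted quadric:
`R_b = ℝ[h,v]/(hv, h^{2k+1}, h^{2k} − b v²)`, `h = X 0`, `v = X 1`. -/
noncomputable def twistedQuadricIdealR (k : ℕ) (b : ℝ) : Ideal (MvPolynomial (Fin 2) ℝ) :=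
  Ideal.span {X 0 * X 1, X 0 ^ (2 * k + 1), X 0 ^ (2 * k) - C b * X 1 ^ 2}

/-- The degree-`j` graded piece of `R_b`, for the grading with `deg h = 2`, `deg v = 2k`:
the image in the quotient of the weighted homogeneous polynomials of weighted degree `j`. -/
noncomputable def twistedQuadricPiece (k : ℕ) (b : ℝ) (j : ℕ) :
    Submodule ℝ (MvPolynomial (Fin 2) ℝ ⧸ twistedQuadricIdealR k b) :=
  Submodule.map (Ideal.Quotient.mkₐ ℝ (twistedQuadricIdealR k b)).toLinearMap
    (weightedHomogeneousSubmodule ℝ ![2, 2 * k] j)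

namespace TwistedAux

lemma not_single_le {i j : Fin 2} {a c : ℕ} (h : ¬ a ≤ (Finsupp.single j c : Fin 2 →₀ ℕ) i) :
    ¬ (Finsupp.single i a : Fin 2 →₀ ℕ) ≤ Finsupp.single j c := by
  intro hle
  exact h (by simpa using Finsupp.le_def.mp hle i)

lemma single_ne {i j : Fin 2} {a c : ℕ} (l : Fin 2)
    (h : (Finsupp.single i a : Fin 2 →₀ ℕ) l ≠ (Finsupp.single j c : Fin 2 →₀ ℕ) l) :
    (Finsupp.single i a : Fin 2 →₀ ℕ) ≠ Finsupp.single j c :=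
  fun he => h (DFunLike.congr_fun he l)

/-- Every element of the ideal is a combination of the three generators. -/
lemma mem_ideal_rep {k : ℕ} {b : ℝ} {p : MvPolynomial (Fin 2) ℝ}
    (hp : p ∈ twistedQuadricIdealR k b) :
    ∃ r s t : MvPolynomial (Fin 2) ℝ,
      p = r * (X 0 * X 1) + s * X 0 ^ (2 * k + 1) + t * (X 0 ^ (2 * k) - C b * X 1 ^ 2) := by
  rw [twistedQuadricIdealR, show ({X 0 * X 1, X 0 ^ (2 * k + 1),
      X 0 ^ (2 * k) - C b * X 1 ^ 2} : Set (MvPolynomial (Fin 2) ℝ)) =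
      insert (X 0 * X 1) (insert (X 0 ^ (2 * k + 1))
        {X 0 ^ (2 * k) - C b * X 1 ^ 2}) from rfl, Ideal.mem_span_insert] at hp
  obtain ⟨r, z, hz, rfl⟩ := hp
  rw [Ideal.mem_span_insert] at hz
  obtain ⟨s, z', hz', rfl⟩ := hz
  rw [Ideal.mem_span_singleton'] at hz'
  obtain ⟨t, rfl⟩ := hz'
  exact ⟨r, s, t, by ring⟩

lemma coeff_mul_X01 (r : MvPolynomial (Fin 2) ℝ) (m : Fin 2 →₀ ℕ)
    (hm : m 0 = 0 ∨ m 1 = 0) :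
    coeff m (r * (X 0 * X 1)) = 0 := by
  rw [← mul_assoc, coeff_mul_X']
  by_cases h : (1 : Fin 2) ∈ m.support
  · rw [if_pos h, coeff_mul_X', if_neg]
    rcases hm with hm | hm
    · simp [Finsupp.mem_support_iff, hm]
    · exact absurd (Finsupp.mem_support_iff.mp h) (by simp [hm])
  · rw [if_neg h]

lemma coeff_mul_Xpow {k : ℕ} (hk : 1 ≤ k) (s : MvPolynomial (Fin 2) ℝ)
    (m : Fin 2 →₀ ℕ) (hm : m 0 ≤ 2 * k) :
    coeff m (s * X 0 ^ (2 * k + 1)) = 0 := by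
  rw [X_pow_eq_monomial, coeff_mul_monomial', if_neg]
  intro hle
  have := Finsupp.le_def.mp hle 0
  simp at this
  omega

lemma coeff_mul_gen3 {k : ℕ} (hk : 1 ≤ k) {b : ℝ} (t : MvPolynomial (Fin 2) ℝ) :
    coeff (Finsupp.single 0 (2 * k)) (t * (X 0 ^ (2 * k) - C b * X 1 ^ 2)) = coeff 0 t ∧
    coeff (Finsupp.single 1 2) (t * (X 0 ^ (2 * k) - C b * X 1 ^ 2)) = -(coeff 0 t * b) ∧
    coeff (Finsupp.single 1 1) (t * (X 0 ^ (2 * k) - C b * X 1 ^ 2)) = 0 := by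
  have h2 : (C b * X 1 ^ 2 : MvPolynomial (Fin 2) ℝ) = monomial (Finsupp.single 1 2) b :=
    C_mul_X_pow_eq_monomial
  have e1 : ¬ (Finsupp.single 0 (2 * k) : Fin 2 →₀ ℕ) ≤ Finsupp.single 1 2 :=
    not_single_le (by simp; omega)
  have e2 : ¬ (Finsupp.single 0 (2 * k) : Fin 2 →₀ ℕ) ≤ Finsupp.single 1 1 :=
    not_single_le (by simp; omega)
  have e3 : ¬ (Finsupp.single 1 2 : Fin 2 →₀ ℕ) ≤ Finsupp.single 0 (2 * k) :=
    not_single_le (by simp)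
  have e4 : ¬ (Finsupp.single 1 2 : Fin 2 →₀ ℕ) ≤ Finsupp.single 1 1 :=
    not_single_le (by simp)
  refine ⟨?_, ?_, ?_⟩ <;>
    rw [mul_sub, coeff_sub, X_pow_eq_monomial, h2, coeff_mul_monomial', coeff_mul_monomial']
  · rw [if_pos le_rfl, if_neg e3]; simp
  · rw [if_neg e1, if_pos le_rfl]; simp
  · rw [if_neg e2, if_neg e4]; simp

/-- The linear functional `coeff h^{2k} + b · coeff v²` kills the ideal when `b² = 1`. -/
lemma L_vanish {k : ℕ} (hk : 1 ≤ k) {b : ℝ} (hb : b * b = 1)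
    {p : MvPolynomial (Fin 2) ℝ} (hp : p ∈ twistedQuadricIdealR k b) :
    coeff (Finsupp.single 0 (2 * k)) p + b * coeff (Finsupp.single 1 2) p = 0 := by
  obtain ⟨r, s, t, rfl⟩ := mem_ideal_rep hp
  obtain ⟨h1, h2, -⟩ := coeff_mul_gen3 hk (b := b) t
  rw [coeff_add, coeff_add, coeff_add, coeff_add,
    coeff_mul_X01 r _ (by simp), coeff_mul_X01 r _ (by simp),
    coeff_mul_Xpow hk s _ (by simp), coeff_mul_Xpow hk s _ (by simp),
    h1, h2]
  rw [show (0:ℝ) + 0 + coeff 0 t + b * (0 + 0 + -(coeff 0 t * b))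
    = coeff 0 t * (1 - b * b) from by ring, hb]
  ring

/-- The linear functional `coeff v` kills the ideal. -/
lemma mu_vanish {k : ℕ} (hk : 1 ≤ k) {b : ℝ}
    {p : MvPolynomial (Fin 2) ℝ} (hp : p ∈ twistedQuadricIdealR k b) :
    coeff (Finsupp.single 1 1) p = 0 := by
  obtain ⟨r, s, t, rfl⟩ := mem_ideal_rep hp
  obtain ⟨-, -, h3⟩ := coeff_mul_gen3 hk (b := b) t
  rw [coeff_add, coeff_add, coeff_mul_X01 r _ (by simp),
    coeff_mul_Xpow hk s _ (by simp), h3]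
  ring

lemma weight_eval {k : ℕ} (m : Fin 2 →₀ ℕ) :
    (Finsupp.weight ![2, 2 * k]) m = m 0 * 2 + m 1 * (2 * k) := by
  rw [Finsupp.weight_apply, Finsupp.sum_fintype _ _ (by intro i; simp), Fin.sum_univ_two]
  simp [smul_eq_mul]

/-- Degree-`2k` homogeneous polynomials are `a h^k + c v`. -/
lemma decomp {k : ℕ} (hk : 1 ≤ k) {p : MvPolynomial (Fin 2) ℝ}
    (hp : p.IsWeightedHomogeneous ![2, 2 * k] (2 * k)) :
    p = C (coeff (Finsupp.single 0 k) p) * X 0 ^ k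
      + C (coeff (Finsupp.single 1 1) p) * X 1 := by
  have hne : (Finsupp.single 0 k : Fin 2 →₀ ℕ) ≠ Finsupp.single 1 1 :=
    single_ne 0 (by simp; omega)
  ext m
  rw [coeff_add, C_mul_X_pow_eq_monomial (n := k), ← pow_one (X 1 : MvPolynomial (Fin 2) ℝ),
    C_mul_X_pow_eq_monomial, coeff_monomial, coeff_monomial]
  by_cases h0 : Finsupp.single 0 k = m
  · subst h0; rw [if_pos rfl, if_neg (fun h => hne h.symm)]; ring
  by_cases h1 : Finsupp.single 1 1 = m
  · subst h1; rw [if_neg hne, if_pos rfl]; ring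
  rw [if_neg h0, if_neg h1]
  by_contra hc
  rw [add_zero] at hc
  have hw := hp hc
  rw [weight_eval] at hw
  have hm1 : m 1 ≤ 1 := by
    by_contra hcon
    push_neg at hcon
    nlinarith [hw, hcon, hk]
  rcases Nat.le_one_iff_eq_zero_or_eq_one.mp hm1 with h | h <;> rw [h] at hw <;> simp at hw
  · refine h0 ?_
    ext i
    fin_cases i <;> simp [Finsupp.single_apply] <;> omega
  · refine h1 ?_
    ext i
    fin_cases i <;> simp [Finsupp.single_apply] <;> omega

end TwistedAux

/-- For `k ≥ 1`, the graded ℝ-algebras `R_1 = ℝ[h,v]/(hv, h^{2k+1}, h^{2k} − v²)` and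
`R_{-1} = ℝ[h,v]/(hv, h^{2k+1}, h^{2k} + v²)` (with `deg h = 2`, `deg v = 2k`) are not
isomorphic as graded ℝ-algebras. -/


theorem twisted_quadrics_not_graded_isomorphic (k : ℕ) (hk : 1 ≤ k) :
    ¬ ∃ e : (MvPolynomial (Fin 2) ℝ ⧸ twistedQuadricIdealR k 1)
        ≃ₐ[ℝ] (MvPolynomial (Fin 2) ℝ ⧸ twistedQuadricIdealR k (-1)),
      ∀ j : ℕ, (twistedQuadricPiece k 1 j).map e.toLinearMap = twistedQuadricPiece k (-1) j := by
  rintro ⟨e, he⟩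
  obtain ⟨n, rfl⟩ : ∃ n, k = n + 1 := ⟨k - 1, by omega⟩
  -- the element h^(n+1) + v of R_{-1}, of degree 2k
  have hhom : IsWeightedHomogeneous ![2, 2 * (n+1)] (X 0 ^ (n+1) + X 1 : MvPolynomial (Fin 2) ℝ)
      (2 * (n+1)) := by
    apply IsWeightedHomogeneous.add
    · rw [X_pow_eq_monomial]
      apply isWeightedHomogeneous_monomial
      rw [TwistedAux.weight_eval]; simp; ring
    · rw [← pow_one (X 1 : MvPolynomial (Fin 2) ℝ), X_pow_eq_monomial]
      apply isWeightedHomogeneous_monomial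
      rw [TwistedAux.weight_eval]; simp
  have hxmem : (Ideal.Quotient.mkₐ ℝ (twistedQuadricIdealR (n+1) (-1))) (X 0 ^ (n+1) + X 1) ∈ twistedQuadricPiece (n+1) (-1) (2 * (n+1)) :=
    ⟨X 0 ^ (n+1) + X 1, hhom, rfl⟩
  rw [← he (2 * (n+1)), Submodule.mem_map] at hxmem
  obtain ⟨y, hy, hey⟩ := hxmem
  obtain ⟨p, hp, rfl⟩ := hy
  simp only [AlgEquiv.toLinearMap_apply, AlgHom.toLinearMap_apply] at hey
  -- (h^(n+1) + v)² = 0 in R_{-1}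
  have hsq : (X 0 ^ (n+1) + X 1 : MvPolynomial (Fin 2) ℝ) * (X 0 ^ (n+1) + X 1) ∈ (twistedQuadricIdealR (n+1) (-1)) := by
    have h1 : (X 0 * X 1 : MvPolynomial (Fin 2) ℝ) ∈ (twistedQuadricIdealR (n+1) (-1)) :=
      Ideal.subset_span (by simp)
    have h3 : (X 0 ^ (2 * (n+1)) - C (-1) * X 1 ^ 2 : MvPolynomial (Fin 2) ℝ) ∈ (twistedQuadricIdealR (n+1) (-1)) :=
      Ideal.subset_span (by simp)
    have := Ideal.add_mem _ (Ideal.mul_mem_left _ (2 * X 0 ^ n) h1) h3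
    convert this using 1
    rw [map_neg, map_one]
    ring
  -- hence p² ∈ (twistedQuadricIdealR (n+1) 1)
  have hy2 : (Ideal.Quotient.mkₐ ℝ (twistedQuadricIdealR (n+1) 1)) (p * p) = 0 := by
    apply e.injective
    rw [map_zero, map_mul, map_mul]
    have hpe : e ((Ideal.Quotient.mkₐ ℝ (twistedQuadricIdealR (n+1) 1)) p) = (Ideal.Quotient.mkₐ ℝ (twistedQuadricIdealR (n+1) (-1))) (X 0 ^ (n+1) + X 1) := hey
    rw [hpe, ← map_mul, Ideal.Quotient.mkₐ_eq_mk, Ideal.Quotient.eq_zero_iff_mem]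
    exact hsq
  rw [Ideal.Quotient.mkₐ_eq_mk, Ideal.Quotient.eq_zero_iff_mem] at hy2
  -- decompose p
  set a := coeff (Finsupp.single 0 (n+1)) p with ha
  set c := coeff (Finsupp.single 1 1) p with hc
  have hpd : p = C a * X 0 ^ (n+1) + C c * X 1 := TwistedAux.decomp (by omega) hp
  -- the quadratic form: a² + c² = 0
  have hL := TwistedAux.L_vanish (b := (1 : ℝ)) (by omega) (by norm_num) hy2
  have h01 : (Finsupp.single 0 (n+1) + Finsupp.single 0 (n+1) : Fin 2 →₀ ℕ)
      = Finsupp.single 0 (2 * (n+1)) := by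
    rw [← Finsupp.single_add]; congr 1; ring
  have h11 : (Finsupp.single 1 1 + Finsupp.single 1 1 : Fin 2 →₀ ℕ)
      = Finsupp.single 1 2 := by
    rw [← Finsupp.single_add]
  have hmix : (Finsupp.single 0 (n+1) + Finsupp.single 1 1 : Fin 2 →₀ ℕ) ≠ Finsupp.single 0 (2 * (n+1))
      := by
    intro h; have := DFunLike.congr_fun h 1; simp at this
  have hmix2 : (Finsupp.single 0 (n+1) + Finsupp.single 1 1 : Fin 2 →₀ ℕ) ≠ Finsupp.single 1 2
      := by
    intro h; have := DFunLike.congr_fun h 0; simp at this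
  have hpp : p * p = monomial (Finsupp.single 0 (2 * (n+1))) (a * a)
      + monomial (Finsupp.single 0 (n+1) + Finsupp.single 1 1) (a * c)
      + (monomial (Finsupp.single 0 (n+1) + Finsupp.single 1 1) (c * a)
      + monomial (Finsupp.single 1 2) (c * c)) := by
    rw [hpd, C_mul_X_pow_eq_monomial (n := (n+1)), ← pow_one (X 1 : MvPolynomial (Fin 2) ℝ),
      C_mul_X_pow_eq_monomial, add_mul, mul_add, mul_add, monomial_mul, monomial_mul,
      monomial_mul, monomial_mul, h01, h11, add_comm (Finsupp.single 1 1 : Fin 2 →₀ ℕ)]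
  have hcoeff1 : coeff (Finsupp.single 0 (2 * (n+1))) (p * p) = a * a := by
    rw [hpp]
    simp only [coeff_add, coeff_monomial, if_true]
    rw [if_neg hmix, if_neg hmix, if_neg (TwistedAux.single_ne 1 (by simp))]
    ring
  have hcoeff2 : coeff (Finsupp.single 1 2) (p * p) = c * c := by
    rw [hpp]
    simp only [coeff_add, coeff_monomial, if_true]
    rw [if_neg (TwistedAux.single_ne 0 (by simp)), if_neg hmix2, if_neg hmix2]
    ring
  rw [hcoeff1, hcoeff2, one_mul] at hL
  have haz : a = 0 := by nlinarith
  have hcz : c = 0 := by nlinarith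
  have hp0 : p = 0 := by rw [hpd, haz, hcz]; simp
  rw [hp0, map_zero, map_zero] at hey
  -- but h^(n+1) + v ≠ 0 in R_{-1}
  rw [eq_comm, Ideal.Quotient.mkₐ_eq_mk, Ideal.Quotient.eq_zero_iff_mem] at hey
  have hmu := TwistedAux.mu_vanish (b := (-1 : ℝ)) (by omega) hey
  rw [coeff_add, X_pow_eq_monomial, coeff_monomial, if_neg
    (TwistedAux.single_ne 1 (by simp)), coeff_X] at hmu
  norm_num at hmu
end

section
/- For every integer n ≥ 2 and odd n ≥ 3, if a_0, ..., a_{n+1} are positive integers and d = a_0⋯a_{n+1} + (−1)^{n+1}, then the linear system w_i + a_{i-1} w_{i-1} = d (indices mod n+2) has determinant d and admits a unique rational solution (w_0, ..., w_{n+1}); moreover each w_i is positive. -/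
/-!
The coefficient matrix is `1` plus a weighted cyclic subdiagonal, so in the Leibniz expansion
only the identity and the rotation `i ↦ i + 1` survive, giving `det = 1 + sign(rotation) ∏ aᵢ`,
which is `d` for odd `n`. Positivity: with `d > 0` and `aᵢ ≥ 1`, the equations force
`wᵢ ≤ 0 → wᵢ₊₁ ≥ d → wᵢ₊₂ ≤ 0`; since `n + 2` is odd, stepping by two reaches `i + 1`,
contradicting `wᵢ₊₁ ≥ d > 0`.
-/

open Matrix Equiv
open Fin.NatCast

namespace Fin

variable {n : ℕ}

theorem perm_eq_one_or_finRotate (σ : Perm (Fin (n + 1)))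
    (hσ : ∀ i, σ i = i ∨ σ i = i + 1) : σ = 1 ∨ σ = finRotate (n + 1) := by
  by_cases hshift : ∃ j, σ j = j + 1
  · obtain ⟨j, hj⟩ := hshift
    have hstep : ∀ x, σ x = x + 1 → σ (x + 1) = x + 1 + 1 := by
      intro x hx
      rcases hσ (x + 1) with hfix | hnext
      · have hx1 : x + 1 = x := σ.injective (hfix.trans hx.symm)
        rw [hfix, hx1, hx1]
      · exact hnext
    have hiter : ∀ t : ℕ, σ (j + t) = j + t + 1 := by
      intro t
      induction t with
      | zero => simpa using hj
      | succ t ih => simpa [add_assoc] using hstep _ ih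
    right
    ext i : 1
    simpa [finRotate_apply] using hiter (i - j).val
  · push Not at hshift
    left
    ext i : 1
    exact (hσ i).resolve_right (hshift i)

theorem add_one_ne (i : Fin (n + 2)) : i + 1 ≠ i := fun h => by
  simpa using add_eq_left.mp h

theorem sub_one_ne (i : Fin (n + 2)) : i - 1 ≠ i := fun h =>
  add_one_ne (i - 1) (by rw [sub_add_cancel, h])

theorem add_one_of_add_two {N : ℕ} [NeZero N] (hN : Odd N) {P : Fin N → Prop}
    (h : ∀ i, P i → P (i + 2)) {i : Fin N} (hi : P i) : P (i + 1) := by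
  have hiter : ∀ t : ℕ, P (i + ((2 * t : ℕ) : Fin N)) := by
    intro t
    induction t with
    | zero => simpa using hi
    | succ t ih =>
      rw [mul_add, mul_one, Nat.cast_add, ← add_assoc]
      exact h _ ih
  obtain ⟨k, hk⟩ := hN
  have hcast : ((2 * (k + 1) : ℕ) : Fin N) = 1 := by
    rw [show 2 * (k + 1) = N + 1 by omega, Nat.cast_succ, natCast_self, zero_add]
  simpa only [hcast] using hiter (k + 1)

end Fin

section KollarMatrix

variable {R : Type*} [CommRing R] {n : ℕ}

def kollarMatrix (a : Fin (n + 2) → R) : Matrix (Fin (n + 2)) (Fin (n + 2)) R :=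
  fun i j => if j = i then 1 else if j = i - 1 then a (i - 1) else 0

theorem kollarMatrix_mulVec (a w : Fin (n + 2) → R) (i : Fin (n + 2)) :
    (kollarMatrix a *ᵥ w) i = w i + a (i - 1) * w (i - 1) := by
  have hne := Fin.sub_one_ne i
  rw [mulVec, dotProduct, ← Finset.sum_subset (Finset.subset_univ {i, i - 1}),
    Finset.sum_pair hne.symm]
  · simp [kollarMatrix, hne]
  · intro j _ hj
    simp only [Finset.mem_insert, Finset.mem_singleton, not_or] at hj
    simp [kollarMatrix, hj.1, hj.2]

theorem perm_eq_one_or_finRotate_of_prod_kollarMatrix_ne_zero (a : Fin (n + 2) → R)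
    {σ : Perm (Fin (n + 2))} (hσ : ∏ i, kollarMatrix a (σ i) i ≠ 0) :
    σ = 1 ∨ σ = finRotate (n + 2) := by
  refine Fin.perm_eq_one_or_finRotate σ fun i => ?_
  have hi : kollarMatrix a (σ i) i ≠ 0 := fun h => hσ (Finset.prod_eq_zero (Finset.mem_univ i) h)
  unfold kollarMatrix at hi
  split_ifs at hi with h1 h2
  · exact Or.inl h1.symm
  · exact Or.inr (eq_sub_iff_add_eq.mp h2).symm
  · exact absurd rfl hi

theorem det_kollarMatrix (a : Fin (n + 2) → R) :
    (kollarMatrix a).det = 1 + (-1) ^ (n + 1) * ∏ i, a i := by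
  have hrot : finRotate (n + 2) ≠ 1 := fun h =>
    Fin.add_one_ne (0 : Fin (n + 2)) (by rw [← finRotate_apply, h]; rfl)
  rw [det_apply, ← Finset.sum_subset (Finset.subset_univ {1, finRotate (n + 2)}),
    Finset.sum_pair hrot.symm]
  · have hdiag : ∏ i, kollarMatrix a i i = 1 := by simp [kollarMatrix]
    have hrotProd : ∏ i, kollarMatrix a (finRotate (n + 2) i) i = ∏ i, a i := by
      refine Finset.prod_congr rfl fun i _ => ?_
      simp [kollarMatrix, finRotate_apply]
    simp only [Perm.one_apply, hdiag, hrotProd]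
    simp [sign_finRotate, Units.smul_def]
  · intro σ _ hσ
    simp only [Finset.mem_insert, Finset.mem_singleton, not_or] at hσ
    by_contra hne
    rcases perm_eq_one_or_finRotate_of_prod_kollarMatrix_ne_zero a
      (fun h => hne (by rw [h, smul_zero])) with h | h
    exacts [hσ.1 h, hσ.2 h]

end KollarMatrix

theorem Matrix.existsUnique_mulVec_eq {m R : Type*} [Fintype m] [DecidableEq m] [CommRing R]
    {A : Matrix m m R} (hA : IsUnit A.det) (b : m → R) : ∃! w, A *ᵥ w = b := by
  have hunit : IsUnit A := (isUnit_iff_isUnit_det A).mpr hA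
  exact Function.Bijective.existsUnique
    ⟨mulVec_injective_of_isUnit hunit, mulVec_surjective_iff_isUnit.mpr hunit⟩ b

theorem pos_of_cyclic_system {K : Type*} [CommRing K] [LinearOrder K] [IsStrictOrderedRing K]
    {N : ℕ} [NeZero N] (hN : Odd N) {a w : Fin N → K} {d : K} (hd : 0 < d)
    (ha : ∀ i, 1 ≤ a i) (hw : ∀ i, w i + a (i - 1) * w (i - 1) = d) (i : Fin N) :
    0 < w i := by
  have hw' : ∀ k, w (k + 1) = d - a k * w k := fun k => by
    simpa using eq_sub_of_add_eq (hw (k + 1))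
  have hfrom_nonpos : ∀ k, w k ≤ 0 → d ≤ w (k + 1) := fun k hk => by
    rw [hw']
    nlinarith [ha k]
  have hfrom_ge : ∀ k, d ≤ w k → w (k + 1) ≤ 0 := fun k hk => by
    rw [hw']
    nlinarith [ha k]
  by_contra! hi
  have hnext : w (i + 1) ≤ 0 := Fin.add_one_of_add_two hN
    (fun k hk => by simpa [add_assoc, one_add_one_eq_two] using hfrom_ge _ (hfrom_nonpos k hk)) hi
  linarith [hfrom_nonpos i hi]

theorem kollar_weight_system_general (n : ℕ) (hodd : Odd n)
    (a : Fin (n + 2) → ℤ) (ha : ∀ i, 0 < a i) :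
    let d : ℤ := (∏ i, a i) + (-1) ^ (n + 1)
    let M : Matrix (Fin (n + 2)) (Fin (n + 2)) ℚ := fun i j =>
      if j = i then 1 else if j = i - 1 then (a (i - 1) : ℚ) else 0
    M.det = (d : ℚ) ∧
      (∃! w : Fin (n + 2) → ℚ, ∀ i, w i + (a (i - 1) : ℚ) * w (i - 1) = (d : ℚ)) ∧
      ∀ w : Fin (n + 2) → ℚ, (∀ i, w i + (a (i - 1) : ℚ) * w (i - 1) = (d : ℚ)) →
        ∀ i, 0 < w i := by
  intro d M
  have hM : M = kollarMatrix fun i => (a i : ℚ) := rfl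
  have hsign : (-1 : ℚ) ^ (n + 1) = 1 := hodd.add_one.neg_one_pow
  have hd : (d : ℚ) = ∏ i, (a i : ℚ) + 1 := by simp [d, hsign]
  have hd_pos : (0 : ℚ) < d := by
    rw [hd]
    exact add_pos (Finset.prod_pos fun i _ => by exact_mod_cast ha i) one_pos
  have hdet : M.det = d := by
    rw [hM, det_kollarMatrix, hsign, hd]
    ring
  have hsystem : ∀ w : Fin (n + 2) → ℚ,
      (∀ i, w i + (a (i - 1) : ℚ) * w (i - 1) = d) ↔ M *ᵥ w = fun _ => (d : ℚ) := fun w => by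
    simp only [funext_iff, hM, kollarMatrix_mulVec]
  refine ⟨hdet, ?_, fun w hw => pos_of_cyclic_system (hodd.add_even even_two) hd_pos
    (a := fun i => (a i : ℚ)) (fun i => by exact_mod_cast (ha i : 1 ≤ a i)) hw⟩
  simp only [hsystem]
  exact existsUnique_mulVec_eq (by rw [hdet]; exact hd_pos.ne'.isUnit) _

/-- For odd `n ≥ 3` and positive integers `a_0, …, a_{n+1}`, with
`d = a_0⋯a_{n+1} + (−1)^{n+1}`, the linear system `w_i + a_{i−1} w_{i−1} = d` (indices mod
`n+2`) has coefficient matrix of determinant `d`, admits a unique rational solution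
`(w_0, …, w_{n+1})`, and every solution has all entries positive. -/
theorem kollar_weight_system (n : ℕ) (hodd : Odd n) (hn : 3 ≤ n)
    (a : Fin (n + 2) → ℤ) (ha : ∀ i, 0 < a i) :
    let d : ℤ := (∏ i, a i) + (-1) ^ (n + 1)
    let M : Matrix (Fin (n + 2)) (Fin (n + 2)) ℚ := fun i j =>
      if j = i then 1 else if j = i - 1 then (a (i - 1) : ℚ) else 0
    M.det = (d : ℚ) ∧
      (∃! w : Fin (n + 2) → ℚ, ∀ i, w i + (a (i - 1) : ℚ) * w (i - 1) = (d : ℚ)) ∧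
      ∀ w : Fin (n + 2) → ℚ, (∀ i, w i + (a (i - 1) : ℚ) * w (i - 1) = (d : ℚ)) →
        ∀ i, 0 < w i :=
  kollar_weight_system_general n hodd a ha
end
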